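/- arXiv:1612.06525 — 5 statements merged into one kernel-verified Lean document; each statement's English description precedes it below -/
import Mathlib

section
/- For positive rationals u₁, u₂ and positive integers n₁, n₂: if there exists a positive rational x such that u₁·x is an n₁-th power and u₂·x is an n₂-th power (of positive rationals), then u₁·u₂⁻¹ is a gcd(n₁,n₂)-th power of a positive rational. -/
theorem stmt_4 (u₁ u₂ : ℚ) (hu₁ : 0 < u₁) (hu₂ : 0 < u₂) (n₁ n₂ : ℕ)
    (hn₁ : 0 < n₁) (hn₂ : 0 < n₂)
    (h : ∃ x : ℚ, 0 < x ∧ (∃ y : ℚ, 0 < y ∧ u₁ * x = y ^ n₁) ∧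
      (∃ y : ℚ, 0 < y ∧ u₂ * x = y ^ n₂)) :
    ∃ y : ℚ, 0 < y ∧ u₁ * u₂⁻¹ = y ^ Nat.gcd n₁ n₂ := by
  obtain ⟨x, hx, ⟨y₁, hy₁, e₁⟩, ⟨y₂, hy₂, e₂⟩⟩ := h
  set d := Nat.gcd n₁ n₂ with hd
  refine ⟨y₁ ^ (n₁ / d) / y₂ ^ (n₂ / d), by positivity, ?_⟩
  have h1 : (y₁ ^ (n₁ / d)) ^ d = y₁ ^ n₁ := by
    rw [← pow_mul, Nat.div_mul_cancel (Nat.gcd_dvd_left n₁ n₂)]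
  have h2 : (y₂ ^ (n₂ / d)) ^ d = y₂ ^ n₂ := by
    rw [← pow_mul, Nat.div_mul_cancel (Nat.gcd_dvd_right n₁ n₂)]
  rw [div_pow, h1, h2, ← e₁, ← e₂]
  field_simp
end

section
/- Let u_1,…,u_l be positive rationals and n_1,…,n_l positive integers. The system of conditions 'u_i·x is an n_i-th power of a positive rational' for i = 1,…,l has a solution x in the positive rationals if and only if for every i ≠ j, u_i·u_j⁻¹ is a gcd(n_i,n_j)-th power of a positive rational. -/
/-!
Write `Gⁿ` for the subgroup of `n`-th powers of a commutative group `G`. Bézout gives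
`Gᵐ Gⁿ = G^gcd(m,n)`, and also `Gᵐ ∩ Gⁿ = G^lcm(m,n)`. Hence the conditions `uᵢ x ∈ G^nᵢ` behave
like simultaneous congruences, and the proof of the Chinese remainder theorem for non-coprime
moduli goes through: two of them have a common solution iff `uᵢ / uⱼ ∈ G^gcd(nᵢ,nⱼ)`, the common
solutions form a coset of `G^lcm(nᵢ,nⱼ)`, and `gcd(lcm(a,b),c) ∣ lcm(gcd(a,c),gcd(b,c))` keeps the
merged condition compatible with the remaining ones. The positive rationals form such a group.
-/

theorem Nat.gcd_lcm_dvd_lcm_gcd (a b c : ℕ) : gcd (lcm a b) c ∣ lcm (gcd a c) (gcd b c) := by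
  rcases eq_or_ne a 0 with rfl | ha
  · simpa using dvd_lcm_left c _
  rcases eq_or_ne b 0 with rfl | hb
  · simpa using dvd_lcm_right _ c
  rcases eq_or_ne c 0 with rfl | hc
  · simp
  rw [← Nat.factorization_le_iff_dvd (gcd_ne_zero_right hc)
    (lcm_ne_zero (gcd_ne_zero_left ha) (gcd_ne_zero_left hb)),
    factorization_gcd (lcm_ne_zero ha hb) hc, factorization_lcm ha hb,
    factorization_lcm (gcd_ne_zero_left ha) (gcd_ne_zero_left hb),
    factorization_gcd ha hc, factorization_gcd hb hc]
  intro p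
  simp only [Finsupp.inf_apply, Finsupp.sup_apply]
  exact (inf_sup_right _ _ _).le

section CommGroup

variable (G : Type*) [CommGroup G]

def powSubgroup (n : ℕ) : Subgroup G := (powMonoidHom n).range

variable {G}

theorem pow_mem_powSubgroup (y : G) (n : ℕ) : y ^ n ∈ powSubgroup G n := ⟨y, rfl⟩

theorem powSubgroup_le_of_dvd {k n : ℕ} (h : k ∣ n) : powSubgroup G n ≤ powSubgroup G k := by
  rintro _ ⟨y, rfl⟩
  obtain ⟨d, rfl⟩ := h
  exact ⟨y ^ d, by simp [← pow_mul, mul_comm]⟩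

theorem powSubgroup_sup (m n : ℕ) :
    powSubgroup G m ⊔ powSubgroup G n = powSubgroup G (m.gcd n) := by
  refine le_antisymm (sup_le (powSubgroup_le_of_dvd (m.gcd_dvd_left n))
    (powSubgroup_le_of_dvd (m.gcd_dvd_right n))) ?_
  rintro _ ⟨w, rfl⟩
  have hbezout : w ^ m.gcd n = (w ^ m.gcdA n) ^ m * (w ^ m.gcdB n) ^ n := by
    rw [← zpow_natCast, Nat.gcd_eq_gcd_ab, zpow_add, mul_comm (m : ℤ), mul_comm (n : ℤ),
      zpow_mul, zpow_mul, zpow_natCast, zpow_natCast]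
  rw [powMonoidHom_apply, hbezout]
  exact Subgroup.mul_mem_sup (pow_mem_powSubgroup _ _) (pow_mem_powSubgroup _ _)

theorem powSubgroup_inf (m n : ℕ) :
    powSubgroup G m ⊓ powSubgroup G n = powSubgroup G (m.lcm n) := by
  refine le_antisymm ?_ (le_inf (powSubgroup_le_of_dvd (m.dvd_lcm_left n))
    (powSubgroup_le_of_dvd (m.dvd_lcm_right n)))
  rintro a ⟨⟨y, hy⟩, ⟨z, hz⟩⟩
  simp only [powMonoidHom_apply] at hy hz
  obtain hg | hg := eq_or_ne (m.gcd n) 0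
  · obtain ⟨rfl, rfl⟩ := Nat.gcd_eq_zero_iff.mp hg
    simp [← hy]
  set g := m.gcd n
  set A := m.gcdA n
  set B := m.gcdB n
  obtain ⟨m', hm⟩ := m.gcd_dvd_left n
  obtain ⟨n', hn⟩ := m.gcd_dvd_right n
  have hbezout : A * m' + B * n' = 1 := by
    have hgab : (g : ℤ) = m * A + n * B := Nat.gcd_eq_gcd_ab m n
    have hm' : (m : ℤ) = g * m' := by exact_mod_cast hm
    have hn' : (n : ℤ) = g * n' := by exact_mod_cast hn
    refine mul_left_cancel₀ (by exact_mod_cast hg : (g : ℤ) ≠ 0) ?_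
    linear_combination -hgab - A * hm' - B * hn'
  have hlcm : m.lcm n = g * m' * n' := by
    refine Nat.eq_of_mul_eq_mul_left (Nat.pos_of_ne_zero hg) ?_
    calc g * m.lcm n = (g * m') * (g * n') := by rw [Nat.gcd_mul_lcm, ← hm, ← hn]
      _ = g * (g * m' * n') := by ring
  have hy' : y ^ ((g * m' : ℕ) : ℤ) = a := by rw [zpow_natCast, ← hm, hy]
  have hz' : z ^ ((g * n' : ℕ) : ℤ) = a := by rw [zpow_natCast, ← hn, hz]
  -- `(z ^ A * y ^ B) ^ lcm = a ^ (A * m / g + B * n / g) = a`; no torsion-freeness is needed.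
  refine ⟨z ^ A * y ^ B, ?_⟩
  calc (z ^ A * y ^ B) ^ m.lcm n
      = (z ^ ((g * n' : ℕ) : ℤ)) ^ (A * m') * (y ^ ((g * m' : ℕ) : ℤ)) ^ (B * n') := by
        rw [hlcm, ← zpow_natCast, mul_zpow, ← zpow_mul, ← zpow_mul, ← zpow_mul, ← zpow_mul]
        push_cast
        ring_nf
    _ = a := by rw [hz', hy', ← zpow_add, hbezout, zpow_one]

theorem exists_mul_mem_powSubgroup_of_div_mem {a b : G} {m n : ℕ}
    (h : a / b ∈ powSubgroup G (m.gcd n)) :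
    ∃ x, a * x ∈ powSubgroup G m ∧ b * x ∈ powSubgroup G n := by
  rw [← powSubgroup_sup, Subgroup.mem_sup] at h
  obtain ⟨y, hy, z, hz, hyz⟩ := h
  rw [eq_div_iff_mul_eq'] at hyz
  refine ⟨b⁻¹ * z⁻¹, ?_, by simpa using inv_mem hz⟩
  rwa [← hyz, show y * z * b * (b⁻¹ * z⁻¹) = y by group]

theorem exists_mul_mem_powSubgroup_of_compat {l : ℕ} (u : Fin l → G) (n : Fin l → ℕ)
    (hu : ∀ i j, i ≠ j → u i / u j ∈ powSubgroup G ((n i).gcd (n j)))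
    (m : ℕ) (b : G) (hb : ∀ i, b / u i ∈ powSubgroup G (m.gcd (n i))) :
    ∃ x, b * x ∈ powSubgroup G m ∧ ∀ i, u i * x ∈ powSubgroup G (n i) := by
  induction l generalizing m b with
  | zero => exact ⟨b⁻¹, by simp [one_mem], fun i => i.elim0⟩
  | succ l ih =>
    -- merge `b * x ∈ Gᵐ` and `u 0 * x ∈ G^(n 0)` into `c⁻¹ * x ∈ G^lcm(m, n 0)`
    obtain ⟨c, hbc, hc⟩ := exists_mul_mem_powSubgroup_of_div_mem (hb 0)
    have hcompat : ∀ i : Fin l,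
        c⁻¹ / u i.succ ∈ powSubgroup G ((m.lcm (n 0)).gcd (n i.succ)) := by
      intro i
      refine powSubgroup_le_of_dvd (Nat.gcd_lcm_dvd_lcm_gcd _ _ _) ?_
      rw [← powSubgroup_inf, Subgroup.mem_inf]
      constructor
      · rw [show c⁻¹ / u i.succ = (b * c)⁻¹ * (b / u i.succ) by
          simp [div_eq_mul_inv, mul_assoc]]
        exact mul_mem (inv_mem (powSubgroup_le_of_dvd (m.gcd_dvd_left _) hbc)) (hb i.succ)
      · rw [show c⁻¹ / u i.succ = (u 0 * c)⁻¹ * (u 0 / u i.succ) by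
          simp [div_eq_mul_inv, mul_assoc]]
        exact mul_mem (inv_mem (powSubgroup_le_of_dvd ((n 0).gcd_dvd_left _) hc))
          (hu 0 i.succ (Fin.succ_ne_zero i).symm)
    obtain ⟨x, hcx, hx⟩ := ih (fun i => u i.succ) (fun i => n i.succ)
      (fun i j hij => hu _ _ ((Fin.succ_injective _).ne hij)) _ c⁻¹ hcompat
    have hmul {a : G} {k : ℕ} (hk : k ∣ m.lcm (n 0)) (ha : a * c ∈ powSubgroup G k) :
        a * x ∈ powSubgroup G k := by
      simpa using mul_mem ha (powSubgroup_le_of_dvd hk hcx)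
    exact ⟨x, hmul (m.dvd_lcm_left _) hbc, Fin.cases (hmul (m.dvd_lcm_right _) hc) hx⟩

theorem exists_forall_mul_mem_powSubgroup_iff {l : ℕ} (u : Fin l → G) (n : Fin l → ℕ) :
    (∃ x, ∀ i, u i * x ∈ powSubgroup G (n i)) ↔
      ∀ i j, i ≠ j → u i / u j ∈ powSubgroup G ((n i).gcd (n j)) := by
  constructor
  · rintro ⟨x, hx⟩ i j -
    rw [← powSubgroup_sup]
    simpa using div_mem (Subgroup.mem_sup_left (hx i)) (Subgroup.mem_sup_right (hx j))
  · intro hu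
    obtain ⟨x, -, hx⟩ := exists_mul_mem_powSubgroup_of_compat u n hu 1 1
      fun i => by simpa using pow_mem_powSubgroup (u i)⁻¹ 1
    exact ⟨x, hx⟩

end CommGroup

theorem Positive.mem_powSubgroup_iff {K : Type*} [Field K] [LinearOrder K] [IsStrictOrderedRing K]
    {q : {x : K // 0 < x}} {n : ℕ} :
    q ∈ powSubgroup _ n ↔ ∃ y : K, 0 < y ∧ (q : K) = y ^ n :=
  ⟨fun ⟨y, hy⟩ => ⟨y, y.2, by rw [← hy]; rfl⟩,
    fun ⟨y, hy, hq⟩ => ⟨⟨y, hy⟩, Subtype.ext hq.symm⟩⟩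

theorem stmt_5_general (l : ℕ) (u : Fin l → ℚ) (hu : ∀ i, 0 < u i)
    (n : Fin l → ℕ) :
    (∃ x : ℚ, 0 < x ∧ ∀ i, ∃ y : ℚ, 0 < y ∧ u i * x = y ^ n i) ↔
      ∀ i j, i ≠ j → ∃ y : ℚ, 0 < y ∧ u i * (u j)⁻¹ = y ^ Nat.gcd (n i) (n j) := by
  have key := exists_forall_mul_mem_powSubgroup_iff (fun i => (⟨u i, hu i⟩ : {q : ℚ // 0 < q})) n
  simpa only [Positive.mem_powSubgroup_iff, Subtype.exists, Positive.val_mul, div_eq_mul_inv,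
    Positive.coe_inv, exists_prop] using key

theorem stmt_5 (l : ℕ) (u : Fin l → ℚ) (hu : ∀ i, 0 < u i)
    (n : Fin l → ℕ) (hn : ∀ i, 0 < n i) :
    (∃ x : ℚ, 0 < x ∧ ∀ i, ∃ y : ℚ, 0 < y ∧ u i * x = y ^ n i) ↔
      ∀ i j, i ≠ j → ∃ y : ℚ, 0 < y ∧ u i * (u j)⁻¹ = y ^ Nat.gcd (n i) (n j) :=
  stmt_5_general l u hu n
end

section
/- Let n = lcm(n_1,…,n_l) and suppose c_1,…,c_l are integers with ∑_i c_i·(n/n_i) = 1. If u_i·u_j⁻¹ is a gcd(n_i,n_j)-th power of a positive rational for all i ≠ j, then x₀ = ∏_{i=1}^{l} u_i^{−c_i·n/n_i} satisfies: u_i·x₀ is an n_i-th power of a positive rational, for every i. -/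
/-!
Since `∑ⱼ cⱼ (n / nⱼ) = 1`, we have `uᵢ x₀ = ∏ⱼ (uᵢ / uⱼ) ^ (cⱼ n / nⱼ)`. Writing
`uᵢ / uⱼ = yⱼ ^ gcd(nᵢ, nⱼ)`, each factor is `yⱼ ^ (cⱼ gcd(nᵢ, nⱼ) n / nⱼ)`, and `nᵢ` divides
`gcd(nᵢ, nⱼ) n / nⱼ` because `nᵢ nⱼ = gcd(nᵢ, nⱼ) lcm(nᵢ, nⱼ)` and `lcm(nᵢ, nⱼ) ∣ n`.
-/

theorem Nat.dvd_gcd_mul_div {a b n : ℕ} (ha : a ∣ n) (hb : b ∣ n) : a ∣ a.gcd b * (n / b) := by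
  rcases b.eq_zero_or_pos with rfl | hb0
  · simp
  have hab : a * b ∣ a.gcd b * (n / b) * b := by
    rw [mul_assoc, Nat.div_mul_cancel hb, ← Nat.gcd_mul_lcm a b]
    exact mul_dvd_mul_left _ (Nat.lcm_dvd ha hb)
  exact Nat.dvd_of_mul_dvd_mul_right hb0 hab

section

variable {ι : Type*}

theorem Finset.prod_zpow_eq_zpow_sum₀ {G₀ : Type*} [CommGroupWithZero G₀] {a : G₀} (ha : a ≠ 0)
    (s : Finset ι) (f : ι → ℤ) : ∏ i ∈ s, a ^ f i = a ^ ∑ i ∈ s, f i := by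
  classical
  induction s using Finset.induction with
  | empty => simp
  | insert b t hb ih => rw [prod_insert hb, sum_insert hb, ih, zpow_add₀ ha]

theorem mul_prod_zpow_neg_eq_prod_div_zpow {G₀ : Type*} [CommGroupWithZero G₀] {s : Finset ι}
    {a : G₀} (ha : a ≠ 0) (b : ι → G₀) {e : ι → ℤ} (he : ∑ j ∈ s, e j = 1) :
    a * ∏ j ∈ s, b j ^ (-e j) = ∏ j ∈ s, (a / b j) ^ e j := by
  conv_lhs => rw [← zpow_one a, ← he, ← Finset.prod_zpow_eq_zpow_sum₀ ha, ← Finset.prod_mul_distrib]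
  exact Finset.prod_congr rfl fun j _ => by rw [div_zpow, zpow_neg, div_eq_mul_inv]

variable {K : Type*} [Field K] [LinearOrder K] [IsStrictOrderedRing K]

theorem exists_pos_pow_eq_prod {s : Finset ι} {f : ι → K} {m : ℕ}
    (hf : ∀ j ∈ s, ∃ y, 0 < y ∧ f j = y ^ m) : ∃ y, 0 < y ∧ ∏ j ∈ s, f j = y ^ m := by
  choose! y hy hfy using hf
  exact ⟨∏ j ∈ s, y j, Finset.prod_pos hy, by rw [← Finset.prod_pow]; exact Finset.prod_congr rfl hfy⟩

theorem exists_pos_zpow_eq_pow_of_dvd {x y : K} (hy : 0 < y) {g m : ℕ} (hx : x = y ^ g) {e : ℤ}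
    (hdvd : (m : ℤ) ∣ g * e) : ∃ z, 0 < z ∧ x ^ e = z ^ m := by
  obtain ⟨k, hk⟩ := hdvd
  refine ⟨y ^ k, zpow_pos hy k, ?_⟩
  rw [hx, ← zpow_natCast, ← zpow_mul, hk, mul_comm (m : ℤ), zpow_mul, zpow_natCast]

end

theorem stmt_6_general (l : ℕ) (u : Fin l → ℚ) (hu : ∀ i, 0 < u i)
    (m : Fin l → ℕ)
    (n : ℕ) (hn : n = Finset.univ.lcm m)
    (c : Fin l → ℤ) (hc : ∑ i, c i * ((n : ℤ) / (m i : ℤ)) = 1)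
    (h : ∀ i j, i ≠ j → ∃ y : ℚ, 0 < y ∧ u i * (u j)⁻¹ = y ^ Nat.gcd (m i) (m j))
    (x₀ : ℚ) (hx₀ : x₀ = ∏ i, (u i) ^ (-(c i * ((n : ℤ) / (m i : ℤ))))) :
    ∀ i, ∃ y : ℚ, 0 < y ∧ u i * x₀ = y ^ m i := by
  intro i
  have hmn : ∀ j, m j ∣ n := fun j => hn ▸ Finset.dvd_lcm (Finset.mem_univ j)
  rw [hx₀, mul_prod_zpow_neg_eq_prod_div_zpow (hu i).ne' u hc]
  refine exists_pos_pow_eq_prod fun j _ => ?_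
  obtain ⟨y, hy, hyeq⟩ : ∃ y : ℚ, 0 < y ∧ u i / u j = y ^ Nat.gcd (m i) (m j) := by
    rcases eq_or_ne i j with rfl | hij
    · exact ⟨1, one_pos, by rw [div_self (hu i).ne', one_pow]⟩
    · simpa only [div_eq_mul_inv] using h i j hij
  have hdvd : (m i : ℤ) ∣ (m i).gcd (m j) * (c j * (n / m j)) := by
    rw [← Int.natCast_div, mul_left_comm]
    exact Dvd.dvd.mul_left (mod_cast Nat.dvd_gcd_mul_div (hmn i) (hmn j)) _
  exact exists_pos_zpow_eq_pow_of_dvd hy hyeq hdvd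

theorem stmt_6 (l : ℕ) (u : Fin l → ℚ) (hu : ∀ i, 0 < u i)
    (m : Fin l → ℕ) (hm : ∀ i, 0 < m i)
    (n : ℕ) (hn : n = Finset.univ.lcm m)
    (c : Fin l → ℤ) (hc : ∑ i, c i * ((n : ℤ) / (m i : ℤ)) = 1)
    (h : ∀ i j, i ≠ j → ∃ y : ℚ, 0 < y ∧ u i * (u j)⁻¹ = y ^ Nat.gcd (m i) (m j))
    (x₀ : ℚ) (hx₀ : x₀ = ∏ i, (u i) ^ (-(c i * ((n : ℤ) / (m i : ℤ))))) :
    ∀ i, ∃ y : ℚ, 0 < y ∧ u i * x₀ = y ^ m i :=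
  stmt_6_general l u hu m n hn c hc h x₀ hx₀
end

section
/- Let n = lcm(n_1,…,n_l). If x₀ and y are both positive rationals such that u_i·x₀ and u_i·y are n_i-th powers of positive rationals for every i, then y = w^n · x₀ for some positive rational w. -/
lemma nat_exists_pow (a k : ℕ) (ha : a ≠ 0) (h : ∀ p, k ∣ a.factorization p) :
    ∃ b : ℕ, b ≠ 0 ∧ a = b ^ k := by
  refine ⟨a.factorization.prod fun p e => p ^ (e / k), ?_, ?_⟩
  · rw [Finsupp.prod]
    apply Finset.prod_ne_zero_iff.2
    intro p hp
    apply pow_ne_zero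
    exact (Nat.prime_of_mem_primeFactors (by simpa using hp)).ne_zero
  · conv_lhs => rw [← Nat.factorization_prod_pow_eq_self ha]
    rw [Finsupp.prod, Finsupp.prod, ← Finset.prod_pow]
    apply Finset.prod_congr rfl
    intro p _
    rw [← pow_mul, Nat.div_mul_cancel (h p)]

lemma rat_exists_pow (q : ℚ) (hq : 0 < q) (k : ℕ)
    (hnum : ∀ p, k ∣ q.num.natAbs.factorization p)
    (hden : ∀ p, k ∣ q.den.factorization p) :
    ∃ z : ℚ, 0 < z ∧ q = z ^ k := by
  obtain ⟨a, ha0, ha⟩ := nat_exists_pow q.num.natAbs k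
    (by simp [Int.natAbs_ne_zero, ne_of_gt (Rat.num_pos.2 hq)]) hnum
  obtain ⟨b, hb0, hb⟩ := nat_exists_pow q.den k q.den_nz hden
  refine ⟨(a : ℚ) / b, ?_, ?_⟩
  · apply div_pos <;> [exact_mod_cast Nat.pos_of_ne_zero ha0;
       exact_mod_cast Nat.pos_of_ne_zero hb0]
  · have hnum' : (q.num : ℚ) = (a : ℚ) ^ k := by
      have : q.num = (q.num.natAbs : ℤ) := (Int.natAbs_of_nonneg (Rat.num_pos.2 hq).le).symm
      rw [this, ha]; push_cast; ring
    have hden' : (q.den : ℚ) = (b : ℚ) ^ k := by exact_mod_cast congrArg (Nat.cast : ℕ → ℚ) hb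
    rw [div_pow, ← hnum', ← hden', Rat.num_div_den]

lemma dvd_of_pow (q v : ℚ) (k : ℕ) (h : q = v ^ k) :
    (∀ p, k ∣ q.num.natAbs.factorization p) ∧ (∀ p, k ∣ q.den.factorization p) := by
  have h1 : q.num.natAbs = v.num.natAbs ^ k := by
    rw [h, Rat.num_pow, Int.natAbs_pow]
  have h2 : q.den = v.den ^ k := by rw [h, Rat.den_pow]
  constructor <;> intro p
  · rw [h1, Nat.factorization_pow]; exact Dvd.intro _ rfl
  · rw [h2, Nat.factorization_pow]; exact Dvd.intro _ rfl

theorem stmt_7 (l : ℕ) (u : Fin l → ℚ) (hu : ∀ i, 0 < u i)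
    (m : Fin l → ℕ) (hm : ∀ i, 0 < m i)
    (n : ℕ) (hn : n = Finset.univ.lcm m)
    (x₀ y : ℚ) (hx₀ : 0 < x₀) (hy : 0 < y)
    (h₀ : ∀ i, ∃ z : ℚ, 0 < z ∧ u i * x₀ = z ^ m i)
    (h₁ : ∀ i, ∃ z : ℚ, 0 < z ∧ u i * y = z ^ m i) :
    ∃ w : ℚ, 0 < w ∧ y = w ^ n * x₀ := by
  set q : ℚ := y / x₀ with hqdef
  have hq : 0 < q := div_pos hy hx₀
  have key : ∀ i, ∃ v : ℚ, 0 < v ∧ q = v ^ m i := by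
    intro i
    obtain ⟨z, hz, hz'⟩ := h₀ i
    obtain ⟨z', hz2, hz2'⟩ := h₁ i
    refine ⟨z' / z, div_pos hz2 hz, ?_⟩
    rw [div_pow, ← hz', ← hz2', hqdef]
    rw [mul_div_mul_left _ _ (ne_of_gt (hu i))]
  have hdvd : ∀ i : Fin l, (∀ p, m i ∣ q.num.natAbs.factorization p) ∧
      (∀ p, m i ∣ q.den.factorization p) := fun i => by
    obtain ⟨v, _, hv⟩ := key i
    exact dvd_of_pow q v (m i) hv
  obtain ⟨w, hw, hwq⟩ := rat_exists_pow q hq n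
    (fun p => hn ▸ Finset.lcm_dvd fun i _ => (hdvd i).1 p)
    (fun p => hn ▸ Finset.lcm_dvd fun i _ => (hdvd i).2 p)
  refine ⟨w, hw, ?_⟩
  rw [← hwq, hqdef, div_mul_cancel₀ _ (ne_of_gt hx₀)]
end

section
/- If a system of conditions over positive rationals of the form 'u_i·x is an n_i-th power for i=1,…,l and v_k·x is not an m_k-th power for k=1,…,m' has at least one solution x, then it has infinitely many solutions. -/
theorem stmt_12 (l m : ℕ) (u : Fin l → ℚ) (hu : ∀ i, 0 < u i)
    (v : Fin m → ℚ) (hv : ∀ k, 0 < v k)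
    (N : Fin l → ℕ) (hN : ∀ i, 0 < N i)
    (M : Fin m → ℕ) (hM : ∀ k, 0 < M k)
    (h : ∃ x : ℚ, 0 < x ∧ (∀ i, ∃ y : ℚ, 0 < y ∧ u i * x = y ^ N i) ∧
      ∀ k, ¬ ∃ y : ℚ, 0 < y ∧ v k * x = y ^ M k) :
    {x : ℚ | 0 < x ∧ (∀ i, ∃ y : ℚ, 0 < y ∧ u i * x = y ^ N i) ∧
      ∀ k, ¬ ∃ y : ℚ, 0 < y ∧ v k * x = y ^ M k}.Infinite := by
  obtain ⟨x, hx, hpow, hnot⟩ := h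
  set L : ℕ := (∏ i, N i) * (∏ k, M k) with hL
  have hLpos : 0 < L := by
    apply Nat.mul_pos <;> exact Finset.prod_pos (fun i _ => by first | exact hN i | exact hM i)
  have hNL : ∀ i, N i ∣ L := fun i =>
    dvd_mul_of_dvd_left (Finset.dvd_prod_of_mem N (Finset.mem_univ i)) _
  have hML : ∀ k, M k ∣ L := fun k =>
    dvd_mul_of_dvd_right (Finset.dvd_prod_of_mem M (Finset.mem_univ k)) _
  apply Set.infinite_of_injective_forall_mem
    (f := fun n : ℕ => x * ((n : ℚ) + 1) ^ L)
  case hi =>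
    intro a b hab
    simp only at hab
    have := mul_left_cancel₀ (ne_of_gt hx) hab
    have h2 : ((a : ℚ) + 1) = ((b : ℚ) + 1) := by
      rcases lt_trichotomy ((a:ℚ)+1) ((b:ℚ)+1) with hlt | he | hgt
      · exact absurd this (ne_of_lt (pow_lt_pow_left₀ hlt (by positivity) (ne_of_gt hLpos)))
      · exact he
      · exact absurd this.symm (ne_of_lt (pow_lt_pow_left₀ hgt (by positivity) (ne_of_gt hLpos)))
    exact Nat.cast_injective (by linarith : (a:ℚ)=(b:ℚ))
  case hf =>
    intro n
    have hnp : (0:ℚ) < (n : ℚ) + 1 := by positivity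
    refine ⟨by positivity, ?_, ?_⟩
    · intro i
      obtain ⟨y, hy, hyx⟩ := hpow i
      obtain ⟨c, hc⟩ := hNL i
      refine ⟨y * ((n : ℚ) + 1) ^ c, by positivity, ?_⟩
      rw [mul_pow, ← pow_mul, Nat.mul_comm c, ← hc, ← mul_assoc, hyx]
    · intro k ⟨y, hy, hyx⟩
      obtain ⟨c, hc⟩ := hML k
      apply hnot k
      refine ⟨y / ((n : ℚ) + 1) ^ c, by positivity, ?_⟩
      rw [div_pow, ← pow_mul, Nat.mul_comm c, ← hc]
      field_simp
      linarith [hyx]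
end
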